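/- arXiv:1911.00154 — 2 statements merged into one kernel-verified Lean document; each statement's English description precedes it below -/
import Mathlib

section
/- Let q be a prime power and let k, n ≥ 1. For all A, B ∈ F_q^{k×n}, the lifted subspaces U_A = rowspace(I_k | A) and U_B = rowspace(I_k | B) are k-dimensional subspaces of F_q^{k+n}; U_A = U_B if and only if A = B; and dim(U_A ∩ U_B) ≤ k − rank(A − B). Consequently the subspace distance satisfies d_S(U_A, U_B) ≥ 2·rank(A − B). -/
open Matrix

/-- The row space of a matrix: the span of its rows. -/
noncomputable def rowSpan {F : Type*} [Field F] {k c : ℕ} (M : Matrix (Fin k) (Fin c) F) :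
    Submodule F (Fin c → F) :=
  Submodule.span F (Set.range M)

/-- The subspace distance `d_S(U, W) = dim(U + W) - dim(U ∩ W)`. -/
noncomputable def sDist {F : Type*} [Field F] {N : ℕ} (U W : Submodule F (Fin N → F)) : ℕ :=
  Module.finrank F ↥(U ⊔ W) - Module.finrank F ↥(U ⊓ W)

/-- `rowspace (I_k | A)` as a subspace of `F^(k+n)`. -/
noncomputable def liftL {F : Type*} [Field F] {k n : ℕ} (A : Matrix (Fin k) (Fin n) F) :
    Submodule F (Fin (k + n) → F) :=
  rowSpan ((Matrix.fromCols (1 : Matrix (Fin k) (Fin k) F) A).submatrix id finSumFinEquiv.symm)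

/-! A vector of `U_A` is `x (I | A)` for a unique `x`, and `x (I | A) = y (I | B)` forces `x = y`
and `x (A - B) = 0`. Hence `U_A ∩ U_B` is the image of the left kernel of `A - B`, of dimension
`k - rank (A - B)`, and `dim (U_A + U_B) = 2k - dim (U_A ∩ U_B)` gives
`d_S (U_A, U_B) = 2 rank (A - B)`. -/

theorem Matrix.rank_add_finrank_ker_vecMulLinear {F m n : Type*} [Field F] [Fintype m]
    [Fintype n] (M : Matrix m n F) :
    M.rank + Module.finrank F (LinearMap.ker M.vecMulLinear) = Fintype.card m := by
  rw [← rank_transpose, rank, ← vecMulLinear_transpose, transpose_transpose,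
    LinearMap.finrank_range_add_finrank_ker, Module.finrank_fintype_fun_eq_card]

section

variable {F : Type*} [Field F] {k n : ℕ}

noncomputable def liftMat (A : Matrix (Fin k) (Fin n) F) : Matrix (Fin k) (Fin (k + n)) F :=
  (fromCols (1 : Matrix (Fin k) (Fin k) F) A).submatrix id finSumFinEquiv.symm

theorem vecMul_liftMat (A : Matrix (Fin k) (Fin n) F) (x : Fin k → F) :
    x ᵥ* liftMat A = Sum.elim x (x ᵥ* A) ∘ finSumFinEquiv.symm :=
  calc x ᵥ* liftMat A = (x ᵥ* fromCols 1 A) ∘ finSumFinEquiv.symm :=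
        submatrix_vecMul_equiv _ x (Equiv.refl _) _
    _ = _ := by rw [vecMul_fromCols, vecMul_one]

theorem vecMul_liftMat_eq_vecMul_liftMat_iff (A B : Matrix (Fin k) (Fin n) F) (x y : Fin k → F) :
    x ᵥ* liftMat A = y ᵥ* liftMat B ↔ x = y ∧ x ᵥ* A = y ᵥ* B := by
  rw [vecMul_liftMat, vecMul_liftMat, finSumFinEquiv.symm.surjective.injective_comp_right.eq_iff]
  constructor
  · intro h
    exact ⟨funext fun i => congrFun h (Sum.inl i), funext fun j => congrFun h (Sum.inr j)⟩
  · rintro ⟨rfl, h⟩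
    rw [h]

theorem liftL_eq_range (A : Matrix (Fin k) (Fin n) F) :
    liftL A = LinearMap.range (liftMat A).vecMulLinear :=
  (range_vecMulLinear _).symm

theorem vecMulLinear_liftMat_injective (A : Matrix (Fin k) (Fin n) F) :
    Function.Injective (liftMat A).vecMulLinear := fun x y h =>
  ((vecMul_liftMat_eq_vecMul_liftMat_iff A A x y).1 h).1

theorem finrank_liftL (A : Matrix (Fin k) (Fin n) F) : Module.finrank F ↥(liftL A) = k := by
  rw [liftL_eq_range, LinearMap.finrank_range_of_inj (vecMulLinear_liftMat_injective A),
    Module.finrank_fin_fun]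

theorem liftL_injective : Function.Injective (liftL : Matrix (Fin k) (Fin n) F → _) := by
  intro A B h
  refine ext_iff_vecMul.2 fun x => ?_
  have hx : x ᵥ* liftMat A ∈ liftL B := by
    rw [← h, liftL_eq_range]
    exact ⟨x, rfl⟩
  obtain ⟨y, hy⟩ := (liftL_eq_range B).le hx
  obtain ⟨rfl, hyx⟩ := (vecMul_liftMat_eq_vecMul_liftMat_iff B A y x).1 hy
  exact hyx.symm

theorem liftL_inf_liftL (A B : Matrix (Fin k) (Fin n) F) :
    liftL A ⊓ liftL B = (LinearMap.ker (A - B).vecMulLinear).map (liftMat A).vecMulLinear := by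
  ext v
  simp only [liftL_eq_range, Submodule.mem_inf, Submodule.mem_map, LinearMap.mem_ker,
    vecMulLinear_apply, vecMul_sub, sub_eq_zero]
  constructor
  · rintro ⟨⟨x, rfl⟩, y, hy⟩
    obtain ⟨rfl, hyx⟩ := (vecMul_liftMat_eq_vecMul_liftMat_iff B A y x).1 hy
    exact ⟨y, hyx.symm, rfl⟩
  · rintro ⟨x, hx, rfl⟩
    exact ⟨⟨x, rfl⟩, x, (vecMul_liftMat_eq_vecMul_liftMat_iff B A x x).2 ⟨rfl, hx.symm⟩⟩

theorem finrank_liftL_inf_liftL_add_rank (A B : Matrix (Fin k) (Fin n) F) :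
    Module.finrank F ↥(liftL A ⊓ liftL B) + (A - B).rank = k := by
  rw [liftL_inf_liftL, ← LinearEquiv.finrank_eq
    (Submodule.equivMapOfInjective _ (vecMulLinear_liftMat_injective A) _), add_comm,
    rank_add_finrank_ker_vecMulLinear, Fintype.card_fin]

theorem sDist_liftL (A B : Matrix (Fin k) (Fin n) F) :
    sDist (liftL A) (liftL B) = 2 * (A - B).rank := by
  have hdim := Submodule.finrank_sup_add_finrank_inf_eq (liftL A) (liftL B)
  have hinf := finrank_liftL_inf_liftL_add_rank A B
  rw [finrank_liftL, finrank_liftL] at hdim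
  rw [sDist]
  omega

end

theorem stmt0_general (k n : ℕ)
    (F : Type*) [Field F]
    (A B : Matrix (Fin k) (Fin n) F) :
    Module.finrank F ↥(liftL A) = k ∧
    Module.finrank F ↥(liftL B) = k ∧
    (liftL A = liftL B ↔ A = B) ∧
    Module.finrank F ↥(liftL A ⊓ liftL B) ≤ k - (A - B).rank ∧
    2 * (A - B).rank ≤ sDist (liftL A) (liftL B) := by
  exact ⟨finrank_liftL A, finrank_liftL B, liftL_injective.eq_iff,
    Nat.le_sub_of_add_le (finrank_liftL_inf_liftL_add_rank A B).le, (sDist_liftL A B).ge⟩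

theorem stmt0 (q k n : ℕ) (hq : IsPrimePow q) (hk : 1 ≤ k) (hn : 1 ≤ n)
    (F : Type*) [Field F] [Fintype F] (hF : Fintype.card F = q)
    (A B : Matrix (Fin k) (Fin n) F) :
    Module.finrank F ↥(liftL A) = k ∧
    Module.finrank F ↥(liftL B) = k ∧
    (liftL A = liftL B ↔ A = B) ∧
    Module.finrank F ↥(liftL A ⊓ liftL B) ≤ k - (A - B).rank ∧
    2 * (A - B).rank ≤ sDist (liftL A) (liftL B) :=
  stmt0_general k n F A B
end

section
/- Let q be a prime power, let d be even, write e = d/2, and suppose n ≥ k ≥ d ≥ 2. Let Q ⊆ F_q^{k×n} be any MRD code with minimum rank distance e, i.e., |Q| = q^{n(k−e+1)} and rank(A − B) ≥ e for all distinct A, B ∈ Q. Then A_q(n+k, d, k) ≥ q^{n(k−e+1)} + Σ_{r=e}^{k−e} A_r(Q), where A_r(Q) = |{X ∈ Q : rank(X) = r}|. -/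
open Matrix

/-- `rowspace (I_k | A)` as a subspace of `F^(n+k)`, with `I_k` in the first `k` coordinates. -/
noncomputable def liftId {F : Type*} [Field F] {k n : ℕ} (A : Matrix (Fin k) (Fin n) F) :
    Submodule F (Fin (n + k) → F) :=
  rowSpan ((Matrix.fromCols (1 : Matrix (Fin k) (Fin k) F) A).submatrix id
    ((finSumFinEquiv.trans (finCongr (Nat.add_comm k n))).symm))

/-- `rowspace (B | I_k)` as a subspace of `F^(n+k)`, with `I_k` in the last `k` coordinates. -/
noncomputable def liftIdR {F : Type*} [Field F] {k n : ℕ} (B : Matrix (Fin k) (Fin n) F) :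
    Submodule F (Fin (n + k) → F) :=
  rowSpan ((Matrix.fromCols B (1 : Matrix (Fin k) (Fin k) F)).submatrix id finSumFinEquiv.symm)

/-- `A_q(N, d, k)`: the maximum size of a constant dimension code of `k`-dimensional
subspaces of `F^N` with pairwise subspace distances at least `d`. -/
noncomputable def Aq (F : Type*) [Field F] (N d k : ℕ) : ℕ :=
  sSup {M : ℕ | ∃ C : Set (Submodule F (Fin N → F)), C.Finite ∧ C.ncard = M ∧
    (∀ U ∈ C, Module.finrank F ↥U = k) ∧
    (∀ U ∈ C, ∀ W ∈ C, U ≠ W → d ≤ sDist U W)}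

/-!
The code consists of the subspaces `rowspace (I_k | A)` for `A ∈ Q` together with
`rowspace (X | I_k)` for `X ∈ Q` with `e ≤ rank X ≤ k - e`; all have dimension `k`, so
`d_S(U, W) = 2 (k - dim (U ∩ W))` and it suffices to show `dim (U ∩ W) ≤ k - e`.

If two generator matrices `M, M'` have the identity in the same `k` columns, a common vector
`x = c M = c' M'` forces `c = c'`, hence `c (M - M') = 0` and `dim (U ∩ W) ≤ k - rank (A - B)`.
For `x` in both `rowspace (I_k | A)` and `rowspace (X | I_k)`, the first `k` coordinates of `x`
determine it and, as `k ≤ n`, they lie in the row space of the first `k` columns of `X`;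
so `dim (U ∩ W) ≤ rank X ≤ k - e`.
-/

open Module

section RowSpan

variable {F : Type*} [Field F] {k N : ℕ}

lemma rowSpan_eq_range_vecMulLinear (M : Matrix (Fin k) (Fin N) F) :
    rowSpan M = LinearMap.range M.vecMulLinear :=
  (range_vecMulLinear M).symm

lemma finrank_rowSpan (M : Matrix (Fin k) (Fin N) F) : finrank F (rowSpan M) = M.rank :=
  (rank_eq_finrank_span_row M).symm

lemma vecMul_submatrix_id {s : ℕ} (M : Matrix (Fin k) (Fin N) F) (g : Fin s → Fin N)
    (c : Fin k → F) : c ᵥ* M.submatrix id g = (c ᵥ* M) ∘ g := by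
  ext a
  simp [vecMul, dotProduct]

variable {M : Matrix (Fin k) (Fin N) F} {ι : Fin k → Fin N}

lemma rank_eq_of_submatrix_eq_one (hM : M.submatrix id ι = 1) : M.rank = k :=
  le_antisymm (rank_le_height M) (by simpa [hM] using rank_submatrix_le M id ι)

lemma vecMul_comp_eq_of_mem_rowSpan (hM : M.submatrix id ι = 1) {x : Fin N → F}
    (hx : x ∈ rowSpan M) : (x ∘ ι) ᵥ* M = x := by
  obtain ⟨c, rfl⟩ := (rowSpan_eq_range_vecMulLinear M ▸ hx : x ∈ LinearMap.range M.vecMulLinear)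
  simp [← vecMul_submatrix_id, hM]

lemma finrank_rowSpan_inf_add_rank_sub_le (hM : M.submatrix id ι = 1)
    {M' : Matrix (Fin k) (Fin N) F} (hM' : M'.submatrix id ι = 1) :
    finrank F ↥(rowSpan M ⊓ rowSpan M') + (M - M').rank ≤ k := by
  have hle : rowSpan M ⊓ rowSpan M' ≤
      (LinearMap.ker (M - M').vecMulLinear).map M.vecMulLinear := by
    intro x ⟨hx, hx'⟩
    refine ⟨x ∘ ι, ?_, vecMul_comp_eq_of_mem_rowSpan hM hx⟩
    simp [vecMul_comp_eq_of_mem_rowSpan hM hx, vecMul_comp_eq_of_mem_rowSpan hM' hx']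
  have hker := LinearMap.finrank_range_add_finrank_ker (M - M').vecMulLinear
  rw [← rowSpan_eq_range_vecMulLinear, finrank_rowSpan, finrank_fin_fun] at hker
  have := (Submodule.finrank_mono hle).trans (Submodule.finrank_map_le _ _)
  omega

lemma finrank_rowSpan_inf_le_rank_submatrix (hM : M.submatrix id ι = 1)
    (M' : Matrix (Fin k) (Fin N) F) :
    finrank F ↥(rowSpan M ⊓ rowSpan M') ≤ (M'.submatrix id ι).rank := by
  have hle : rowSpan M ⊓ rowSpan M' ≤ (rowSpan (M'.submatrix id ι)).map M.vecMulLinear := by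
    intro x ⟨hx, hx'⟩
    refine ⟨x ∘ ι, ?_, vecMul_comp_eq_of_mem_rowSpan hM hx⟩
    obtain ⟨v, rfl⟩ :=
      (rowSpan_eq_range_vecMulLinear M' ▸ hx' : x ∈ LinearMap.range M'.vecMulLinear)
    rw [rowSpan_eq_range_vecMulLinear]
    exact ⟨v, vecMul_submatrix_id M' ι v⟩
  rw [← finrank_rowSpan]
  exact (Submodule.finrank_mono hle).trans (Submodule.finrank_map_le _ _)

end RowSpan

section SubspaceDistance

variable {F : Type*} [Field F] {N : ℕ}

lemma sDist_comm (U W : Submodule F (Fin N → F)) : sDist U W = sDist W U := by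
  rw [sDist, sDist, sup_comm, inf_comm]

lemma ne_of_pos_sDist {U W : Submodule F (Fin N → F)} (h : 0 < sDist U W) : U ≠ W := by
  rintro rfl
  rw [sDist, inf_idem U, sup_idem U, Nat.sub_self] at h
  exact h.false

lemma two_mul_le_sDist {U W : Submodule F (Fin N → F)} {k e : ℕ}
    (hU : finrank F U = k) (hW : finrank F W = k) (h : finrank F ↥(U ⊓ W) + e ≤ k) :
    2 * e ≤ sDist U W := by
  have := Submodule.finrank_sup_add_finrank_inf_eq U W
  rw [sDist]
  omega

lemma card_le_Aq [Finite F] {d k : ℕ} (C : Finset (Submodule F (Fin N → F)))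
    (hdim : ∀ U ∈ C, finrank F U = k) (hdist : ∀ U ∈ C, ∀ W ∈ C, U ≠ W → d ≤ sDist U W) :
    C.card ≤ Aq F N d k := by
  refine le_csSup ⟨Nat.card (Submodule F (Fin N → F)), ?_⟩
    ⟨C, C.finite_toSet, Set.ncard_coe_finset C, hdim, hdist⟩
  rintro _ ⟨C', -, rfl, -, -⟩
  exact Set.ncard_le_card C'

lemma card_add_card_le_Aq [Finite F] {ι κ : Type*} {d k : ℕ} (hd : 0 < d)
    (s : Finset ι) (t : Finset κ) {f : ι → Submodule F (Fin N → F)}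
    {g : κ → Submodule F (Fin N → F)} (hf : ∀ a, finrank F (f a) = k)
    (hg : ∀ b, finrank F (g b) = k)
    (hff : ∀ a ∈ s, ∀ a' ∈ s, a ≠ a' → d ≤ sDist (f a) (f a'))
    (hgg : ∀ b ∈ t, ∀ b' ∈ t, b ≠ b' → d ≤ sDist (g b) (g b'))
    (hfg : ∀ a ∈ s, ∀ b ∈ t, d ≤ sDist (f a) (g b)) :
    s.card + t.card ≤ Aq F N d k := by
  classical
  have hcard : (s.image f ∪ t.image g).card = s.card + t.card := by
    rw [Finset.card_union_of_disjoint, Finset.card_image_of_injOn, Finset.card_image_of_injOn]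
    · exact fun b hb b' hb' h => by_contra fun hne =>
        ne_of_pos_sDist (hd.trans_le (hgg b hb b' hb' hne)) h
    · exact fun a ha a' ha' h => by_contra fun hne =>
        ne_of_pos_sDist (hd.trans_le (hff a ha a' ha' hne)) h
    · simp only [Finset.disjoint_left, Finset.mem_image, not_exists, not_and]
      rintro _ ⟨a, ha, rfl⟩ b hb
      exact (ne_of_pos_sDist (hd.trans_le (hfg a ha b hb))).symm
  rw [← hcard]
  refine card_le_Aq _ ?_ ?_
  · simp only [Finset.mem_union, Finset.mem_image]
    rintro _ (⟨a, -, rfl⟩ | ⟨b, -, rfl⟩)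
    exacts [hf a, hg b]
  · simp only [Finset.mem_union, Finset.mem_image]
    rintro _ (⟨a, ha, rfl⟩ | ⟨b, hb, rfl⟩) _ (⟨a', ha', rfl⟩ | ⟨b', hb', rfl⟩) hne
    · exact hff a ha a' ha' (ne_of_apply_ne _ hne)
    · exact hfg a ha b' hb'
    · exact sDist_comm (g b) (f a') ▸ hfg a' ha' b hb
    · exact hgg b hb b' hb' (ne_of_apply_ne _ hne)

end SubspaceDistance

section Lifting

variable {F : Type*} [Field F] {k n : ℕ}

def liftIdMatrix (A : Matrix (Fin k) (Fin n) F) : Matrix (Fin k) (Fin (n + k)) F :=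
  (fromCols 1 A).submatrix id (finSumFinEquiv.trans (finCongr (Nat.add_comm k n))).symm

def liftIdRMatrix (B : Matrix (Fin k) (Fin n) F) : Matrix (Fin k) (Fin (n + k)) F :=
  (fromCols B 1).submatrix id finSumFinEquiv.symm

lemma liftId_eq_rowSpan (A : Matrix (Fin k) (Fin n) F) : liftId A = rowSpan (liftIdMatrix A) :=
  rfl

lemma liftIdR_eq_rowSpan (B : Matrix (Fin k) (Fin n) F) :
    liftIdR B = rowSpan (liftIdRMatrix B) :=
  rfl

lemma liftIdMatrix_submatrix_castLE (A : Matrix (Fin k) (Fin n) F) :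
    (liftIdMatrix A).submatrix id (Fin.castLE (Nat.le_add_left k n)) = 1 := by
  ext i a
  have : Fin.castLE (Nat.le_add_left k n) a = Fin.cast (Nat.add_comm k n) (Fin.castAdd n a) :=
    rfl
  simp [liftIdMatrix, this]

lemma liftIdMatrix_sub_submatrix_natAdd (A B : Matrix (Fin k) (Fin n) F) :
    (liftIdMatrix A - liftIdMatrix B).submatrix id
      (fun b => Fin.cast (Nat.add_comm k n) (Fin.natAdd k b)) = A - B := by
  ext i b
  simp [liftIdMatrix]

lemma liftIdRMatrix_submatrix_natAdd (B : Matrix (Fin k) (Fin n) F) :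
    (liftIdRMatrix B).submatrix id (Fin.natAdd n) = 1 := by
  ext i a
  simp [liftIdRMatrix]

lemma liftIdRMatrix_sub_submatrix_castAdd (A B : Matrix (Fin k) (Fin n) F) :
    (liftIdRMatrix A - liftIdRMatrix B).submatrix id (Fin.castAdd k) = A - B := by
  ext i b
  simp [liftIdRMatrix]

lemma liftIdRMatrix_submatrix_castLE (hkn : k ≤ n) (B : Matrix (Fin k) (Fin n) F) :
    (liftIdRMatrix B).submatrix id (Fin.castLE (Nat.le_add_left k n)) =
      B.submatrix id (Fin.castLE hkn) := by
  ext i a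
  have : Fin.castLE (Nat.le_add_left k n) a = Fin.castAdd k (Fin.castLE hkn a) := rfl
  simp [liftIdRMatrix, this]

lemma finrank_liftId (A : Matrix (Fin k) (Fin n) F) : finrank F (liftId A) = k := by
  rw [liftId_eq_rowSpan, finrank_rowSpan,
    rank_eq_of_submatrix_eq_one (liftIdMatrix_submatrix_castLE A)]

lemma finrank_liftIdR (B : Matrix (Fin k) (Fin n) F) : finrank F (liftIdR B) = k := by
  rw [liftIdR_eq_rowSpan, finrank_rowSpan,
    rank_eq_of_submatrix_eq_one (liftIdRMatrix_submatrix_natAdd B)]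

lemma finrank_liftId_inf_add_rank_sub_le (A B : Matrix (Fin k) (Fin n) F) :
    finrank F ↥(liftId A ⊓ liftId B) + (A - B).rank ≤ k := by
  have h := finrank_rowSpan_inf_add_rank_sub_le (liftIdMatrix_submatrix_castLE A)
    (liftIdMatrix_submatrix_castLE B)
  have := rank_submatrix_le (liftIdMatrix A - liftIdMatrix B) id
    (fun b => Fin.cast (Nat.add_comm k n) (Fin.natAdd k b))
  rw [liftIdMatrix_sub_submatrix_natAdd] at this
  rw [liftId_eq_rowSpan, liftId_eq_rowSpan]
  omega

lemma finrank_liftIdR_inf_add_rank_sub_le (A B : Matrix (Fin k) (Fin n) F) :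
    finrank F ↥(liftIdR A ⊓ liftIdR B) + (A - B).rank ≤ k := by
  have h := finrank_rowSpan_inf_add_rank_sub_le (liftIdRMatrix_submatrix_natAdd A)
    (liftIdRMatrix_submatrix_natAdd B)
  have := rank_submatrix_le (liftIdRMatrix A - liftIdRMatrix B) id (Fin.castAdd k)
  rw [liftIdRMatrix_sub_submatrix_castAdd] at this
  rw [liftIdR_eq_rowSpan, liftIdR_eq_rowSpan]
  omega

lemma finrank_liftId_inf_liftIdR_le (hkn : k ≤ n) (A B : Matrix (Fin k) (Fin n) F) :
    finrank F ↥(liftId A ⊓ liftIdR B) ≤ B.rank := by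
  have h := finrank_rowSpan_inf_le_rank_submatrix (liftIdMatrix_submatrix_castLE A)
    (liftIdRMatrix B)
  rw [liftIdRMatrix_submatrix_castLE hkn] at h
  exact h.trans (rank_submatrix_le B id (Fin.castLE hkn))

lemma two_mul_le_sDist_liftId {e : ℕ} {A B : Matrix (Fin k) (Fin n) F}
    (h : e ≤ (A - B).rank) : 2 * e ≤ sDist (liftId A) (liftId B) :=
  two_mul_le_sDist (finrank_liftId A) (finrank_liftId B)
    ((Nat.add_le_add_left h _).trans (finrank_liftId_inf_add_rank_sub_le A B))

lemma two_mul_le_sDist_liftIdR {e : ℕ} {A B : Matrix (Fin k) (Fin n) F}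
    (h : e ≤ (A - B).rank) : 2 * e ≤ sDist (liftIdR A) (liftIdR B) :=
  two_mul_le_sDist (finrank_liftIdR A) (finrank_liftIdR B)
    ((Nat.add_le_add_left h _).trans (finrank_liftIdR_inf_add_rank_sub_le A B))

lemma two_mul_le_sDist_liftId_liftIdR (hkn : k ≤ n) {e : ℕ} (A : Matrix (Fin k) (Fin n) F)
    {B : Matrix (Fin k) (Fin n) F} (h : B.rank + e ≤ k) :
    2 * e ≤ sDist (liftId A) (liftIdR B) :=
  two_mul_le_sDist (finrank_liftId A) (finrank_liftIdR B)
    ((Nat.add_le_add_right (finrank_liftId_inf_liftIdR_le hkn A B) e).trans h)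

end Lifting

theorem stmt5_general (q k n d e : ℕ) (hde : d = 2 * e)
    (hd2 : 2 ≤ d) (hkn : k ≤ n)
    (F : Type*) [Field F] [Fintype F]
    (Q : Finset (Matrix (Fin k) (Fin n) F))
    (hcard : Q.card = q ^ (n * (k - e + 1)))
    (hQ : ∀ A ∈ Q, ∀ B ∈ Q, A ≠ B → e ≤ (A - B).rank) :
    q ^ (n * (k - e + 1)) +
        ∑ r ∈ Finset.Icc e (k - e), (Q.filter (fun X => X.rank = r)).card
      ≤ Aq F (n + k) d k := by
  classical
  subst hde
  set Q' := Q.filter (fun X => X.rank ∈ Finset.Icc e (k - e))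
  have hQ' : ∀ X ∈ Q', X ∈ Q ∧ X.rank + e ≤ k := by
    intro X hX
    simp only [Q', Finset.mem_filter, Finset.mem_Icc] at hX
    exact ⟨hX.1, by omega⟩
  rw [← hcard, Finset.sum_card_fiberwise_eq_card_filter]
  refine card_add_card_le_Aq (by omega) Q Q' finrank_liftId finrank_liftIdR ?_ ?_ ?_
  · exact fun A hA B hB hAB => two_mul_le_sDist_liftId (hQ A hA B hB hAB)
  · exact fun A hA B hB hAB => two_mul_le_sDist_liftIdR (hQ A (hQ' A hA).1 B (hQ' B hB).1 hAB)
  · exact fun A _ B hB => two_mul_le_sDist_liftId_liftIdR hkn A (hQ' B hB).2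

theorem stmt5 (q k n d e : ℕ) (hq : IsPrimePow q) (hde : d = 2 * e)
    (hd2 : 2 ≤ d) (hdk : d ≤ k) (hkn : k ≤ n)
    (F : Type*) [Field F] [Fintype F] (hF : Fintype.card F = q)
    (Q : Finset (Matrix (Fin k) (Fin n) F))
    (hcard : Q.card = q ^ (n * (k - e + 1)))
    (hQ : ∀ A ∈ Q, ∀ B ∈ Q, A ≠ B → e ≤ (A - B).rank) :
    q ^ (n * (k - e + 1)) +
        ∑ r ∈ Finset.Icc e (k - e), (Q.filter (fun X => X.rank = r)).card
      ≤ Aq F (n + k) d k :=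
  stmt5_general q k n d e hde hd2 hkn F Q hcard hQ
end
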